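/- For games with prefix-independent cost functions of finite range, the elimination procedure stabilizes in finitely many steps: there exists a natural number α* such that P_α*(v) = P_{α*+1}(v) for all vertices v. -/

import Mathlib

open Classical

noncomputable section

/-- A multiplayer turn-based quantitative game on a directed graph:
`owner` assigns each vertex to a player, `E` is the edge relation (every
vertex has a successor), and `cost i` is player `i`'s cost function on
infinite sequences of vertices (to be minimized), valued in `ℝ ∪ {±∞}`. -/
structure QGame (P V : Type) where
  owner : V → P
  E : V → V → Prop
  succ_exists : ∀ v, ∃ v', E v v'
  cost : P → (ℕ → V) → EReal

namespace QGame

variable {P V : Type}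

/-- An infinite play of the game: consecutive vertices are joined by edges. -/
def IsPlay (G : QGame P V) (ρ : ℕ → V) : Prop := ∀ n, G.E (ρ n) (ρ (n + 1))

/-- Concatenation `hρ` of a finite history `h` with an infinite play `ρ`. -/
def prepend (h : List V) (ρ : ℕ → V) : ℕ → V := fun n =>
  if hn : n < h.length then h.get ⟨n, hn⟩ else ρ (n - h.length)

/-- The prefix of length `n` of a play, as a list. -/
def playPrefix (ρ : ℕ → V) (n : ℕ) : List V := List.ofFn fun k : Fin n => ρ k

/-- `hv` is a history of the game initialized at `v0`: here `h` is the strict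
past and `v` the current vertex; the sequence `h ++ [v]` starts at `v0` and
follows edges. -/
def IsHist (G : QGame P V) (v0 : V) (h : List V) (v : V) : Prop :=
  (h ++ [v]).head? = some v0 ∧ List.Chain' G.E (h ++ [v])

/-- A (turn-based) strategy profile: given the past history and the current
vertex, choose the next vertex.  An individual strategy of player `i` is of
the same type; only its values at vertices owned by `i` matter. -/
abbrev Strat (P V : Type) := List V → V → V

/-- A profile/strategy is valid if it always follows edges. -/
def Valid (G : QGame P V) (σ : Strat P V) : Prop := ∀ h v, G.E v (σ h v)

/-- History/current-vertex pair produced after `n` steps of `σ` from `v`. -/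
def outcomeAux (σ : Strat P V) (v : V) : ℕ → List V × V
  | 0 => ([], v)
  | n + 1 =>
      let p := outcomeAux σ v n
      (p.1 ++ [p.2], σ p.1 p.2)

/-- The outcome play of profile `σ` from initial vertex `v`. -/
def outcome (σ : Strat P V) (v : V) (n : ℕ) : V := (outcomeAux σ v n).2

/-- The profile where player `i` unilaterally deviates to strategy `τ`
from the profile `σ`. -/
def devProf (G : QGame P V) (σ τ : Strat P V) (i : P) : Strat P V :=
  fun h v => if G.owner v = i then τ h v else σ h v

/-- The set of deviation steps of `τ` from `σ` (for player `i`, from `v`):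
positions `n` along the outcome of the deviated profile where the current
vertex belongs to player `i` and `τ` disagrees with `σ`. -/
def devSteps (G : QGame P V) (σ τ : Strat P V) (i : P) (v : V) : Set ℕ :=
  {n | G.owner (outcome (G.devProf σ τ i) v n) = i ∧
       σ (outcomeAux (G.devProf σ τ i) v n).1 (outcome (G.devProf σ τ i) v n) ≠
       τ (outcomeAux (G.devProf σ τ i) v n).1 (outcome (G.devProf σ τ i) v n)}

/-- `τ` is finitely deviating from `σ`. -/
def FinDev (G : QGame P V) (σ τ : Strat P V) (i : P) (v : V) : Prop :=
  (G.devSteps σ τ i v).Finite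

/-- `τ` is one-shot deviating from `σ`: its unique deviation step is at the
initial vertex. -/
def OneShotDev (G : QGame P V) (σ τ : Strat P V) (i : P) (v : V) : Prop :=
  G.devSteps σ τ i v = {0}

/-- Nash equilibrium of the profile `σ` from `v`, with respect to a cost
assignment `c` (no player has a profitable unilateral deviation). -/
def IsNEwith (G : QGame P V) (c : P → (ℕ → V) → EReal) (σ : Strat P V) (v : V) : Prop :=
  ∀ i τ, G.Valid τ →
    c i (outcome σ v) ≤ c i (outcome (G.devProf σ τ i) v)

/-- Weak Nash equilibrium: no profitable finitely deviating strategy. -/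
def IsWeakNEwith (G : QGame P V) (c : P → (ℕ → V) → EReal) (σ : Strat P V) (v : V) : Prop :=
  ∀ i τ, G.Valid τ → G.FinDev σ τ i v →
    c i (outcome σ v) ≤ c i (outcome (G.devProf σ τ i) v)

/-- Very weak Nash equilibrium: no profitable one-shot deviating strategy. -/
def IsVeryWeakNEwith (G : QGame P V) (c : P → (ℕ → V) → EReal) (σ : Strat P V) (v : V) : Prop :=
  ∀ i τ, G.Valid τ → G.OneShotDev σ τ i v →
    c i (outcome σ v) ≤ c i (outcome (G.devProf σ τ i) v)

/-- The strategy profile induced by `σ` in the subgame after history `h`. -/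
def subStrat (σ : Strat P V) (h : List V) : Strat P V := fun g v => σ (h ++ g) v

/-- The cost functions of the subgame after history `h`. -/
def subCost (G : QGame P V) (h : List V) : P → (ℕ → V) → EReal :=
  fun i ρ => G.cost i (prepend h ρ)

/-- Subgame perfect equilibrium: Nash equilibrium in every subgame. -/
def IsSPE (G : QGame P V) (v0 : V) (σ : Strat P V) : Prop :=
  ∀ h v, G.IsHist v0 h v → G.IsNEwith (G.subCost h) (subStrat σ h) v

/-- Weak subgame perfect equilibrium: weak NE in every subgame. -/
def IsWeakSPE (G : QGame P V) (v0 : V) (σ : Strat P V) : Prop :=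
  ∀ h v, G.IsHist v0 h v → G.IsWeakNEwith (G.subCost h) (subStrat σ h) v

/-- Very weak subgame perfect equilibrium: very weak NE in every subgame. -/
def IsVeryWeakSPE (G : QGame P V) (v0 : V) (σ : Strat P V) : Prop :=
  ∀ h v, G.IsHist v0 h v → G.IsVeryWeakNEwith (G.subCost h) (subStrat σ h) v

/-- One elimination step: `ρ` (a potential outcome in the subgame after `h`)
is erased if some player `i` controlling a vertex `ρ n` along `hρ` has an
alternative edge to some `v' ≠ ρ (n+1)` such that every play `ρ'` in the
current potential set after the extended history gives `i` a strictly
smaller cost than `hρ`. -/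
def Eset (G : QGame P V) (Pr : List V → V → Set (ℕ → V)) (h : List V) :
    Set (ℕ → V) :=
  {ρ | ∃ n v', G.E (ρ n) v' ∧ v' ≠ ρ (n + 1) ∧
      ∀ ρ' ∈ Pr (h ++ playPrefix ρ (n + 1)) v',
        G.cost (G.owner (ρ n)) (prepend (h ++ playPrefix ρ (n + 1)) ρ') <
          G.cost (G.owner (ρ n)) (prepend h ρ)}

/-- The transfinite sequence `P_α(hv)` of sets of potential outcomes of weak
Nash equilibria in the subgame `(G|_h, v)`: all plays at stage `0`, removal
of `E_α` at successors, intersections at limits. -/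
def Pset (G : QGame P V) (α : Ordinal) : List V → V → Set (ℕ → V) :=
  Ordinal.limitRecOn (motive := fun _ => List V → V → Set (ℕ → V)) α
    (fun _h v => {ρ | G.IsPlay ρ ∧ ρ 0 = v})
    (fun _ Pr => fun h v => Pr h v \ G.Eset Pr h)
    (fun α _ Pr => fun h v => ⋂ (β : Ordinal) (hβ : β < α), Pr β hβ h v)

/-- A sequence of plays converges to `ρ` (in the product topology on `V^ω`
with `V` discrete) iff every finite prefix of `ρ` is eventually a prefix of
the members of the sequence. -/
def Converges (ρs : ℕ → ℕ → V) (ρ : ℕ → V) : Prop :=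
  ∀ m, ∃ N, ∀ n ≥ N, ∀ k ≤ m, ρs n k = ρ k

/-- Upper semicontinuity of a cost function on plays. -/
def USCcost (G : QGame P V) (c : (ℕ → V) → EReal) : Prop :=
  ∀ (ρs : ℕ → ℕ → V) (ρ : ℕ → V), (∀ n, G.IsPlay (ρs n)) → G.IsPlay ρ →
    Converges ρs ρ →
      Filter.limsup (fun n => c (ρs n)) Filter.atTop ≤ c ρ

/-- A strategy (profile) is finite-memory if it is computed by a Moore
machine: a finite set `M` of memory states, updated while reading the
history, determines the move. -/
def FinMem (σ : Strat P V) : Prop :=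
  ∃ (M : Type) (_ : Finite M) (m0 : M) (upd : M → V → M) (act : M → V → V),
    ∀ h v, σ h v = act (h.foldl upd m0) v

/-- Quantitative reachability cost: the least index at which `ρ` visits the
target set `T`, and `+∞` if `T` is never visited. -/
def reachCost (T : Set V) (ρ : ℕ → V) : EReal :=
  if h : ∃ n, ρ n ∈ T then ((Nat.find h : ℕ) : EReal) else ⊤

/-- `G` is a quantitative reachability game with target sets `T i`. -/
def IsReachGame (G : QGame P V) (T : P → Set V) : Prop :=
  ∀ i ρ, G.cost i ρ = reachCost (T i) ρ

/-- The set of players that have not visited their target set along the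
history `h`. -/
def Iset (T : P → Set V) (h : List V) : Set P := {i | ∀ u ∈ h, u ∉ T i}

end QGame

/-!
With prefix-independent costs, the stages `P_n(hv)` forget the history `h`, and whether a play
is eliminated at stage `n` depends only on the sets `T_n(v', i)` (`costValues n v' i`) of costs
player `i` can still obtain from each vertex `v'`. These sets only shrink, and each lies in the
finite range of `cost i`, so on a finite graph they stabilise: `T_{n+1} = T_n` for some `n`.
Then stage `n + 2` removes the same plays as stage `n + 1` did, so `P_{n+1} = P_{n+2}`.
-/

lemma Antitone.exists_succ_eq_of_finite_range {α : Type*} [PartialOrder α] {f : ℕ → α}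
    (hf : Antitone f) (hfin : (Set.range f).Finite) : ∃ n, f (n + 1) = f n := by
  by_contra! hne
  exact Set.infinite_range_of_injective
    (strictAnti_nat_of_succ_lt fun n => (hf n.le_succ).lt_of_ne (hne n)).injective hfin

namespace QGame

variable {P V : Type} (G : QGame P V)

lemma Pset_zero (h : List V) (v : V) : G.Pset 0 h v = {ρ | G.IsPlay ρ ∧ ρ 0 = v} := by
  simp only [Pset, Ordinal.limitRecOn_zero]

lemma Pset_add_one (α : Ordinal) (h : List V) (v : V) :
    G.Pset (α + 1) h v = G.Pset α h v \ G.Eset (G.Pset α) h := by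
  simp only [Pset, Ordinal.limitRecOn_add_one]

/-- `Eset` when the continuation from `v'` may achieve exactly the costs `t v' i` for player `i`. -/
def EsetOfValues (t : V → P → Set EReal) : Set (ℕ → V) :=
  {ρ | ∃ n v', G.E (ρ n) v' ∧ v' ≠ ρ (n + 1) ∧
      ∀ x ∈ t v' (G.owner (ρ n)), x < G.cost (G.owner (ρ n)) ρ}

def Qset : ℕ → V → Set (ℕ → V)
  | 0 => fun v => {ρ | G.IsPlay ρ ∧ ρ 0 = v}
  | n + 1 => fun v => Qset n v \ G.EsetOfValues fun v' i => G.cost i '' Qset n v'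

def costValues (n : ℕ) : V → P → Set EReal := fun v i => G.cost i '' G.Qset n v

lemma Qset_succ (n : ℕ) (v : V) :
    G.Qset (n + 1) v = G.Qset n v \ G.EsetOfValues (G.costValues n) := rfl

lemma isPlay_of_mem_Qset {n : ℕ} {v : V} {ρ : ℕ → V} (hρ : ρ ∈ G.Qset n v) :
    G.IsPlay ρ := by
  induction n with
  | zero => exact hρ.1
  | succ n ih => exact ih hρ.1

lemma costValues_antitone : Antitone G.costValues :=
  antitone_nat_of_succ_le fun _ _ _ => Set.image_mono Set.sdiff_subset

lemma finite_range_costValues [Finite P] [Finite V] {D : P → Set EReal}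
    (hD : ∀ i, (D i).Finite) (hcost : ∀ i ρ, G.IsPlay ρ → G.cost i ρ ∈ D i) :
    (Set.range G.costValues).Finite := by
  refine (Set.Finite.pi fun _ => Set.Finite.pi fun i => (hD i).finite_subsets).subset ?_
  rintro _ ⟨n, rfl⟩ v - i -
  rintro _ ⟨ρ, hρ, rfl⟩
  exact hcost i ρ (G.isPlay_of_mem_Qset hρ)

lemma Qset_stable_of_costValues_succ_eq {n : ℕ} (hn : G.costValues (n + 1) = G.costValues n)
    (v : V) : G.Qset (n + 2) v = G.Qset (n + 1) v := by
  rw [Qset_succ, hn, Qset_succ, Set.sdiff_sdiff, Set.union_self]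

lemma Pset_natCast_eq_Qset (hpi : ∀ i h ρ, G.cost i (prepend h ρ) = G.cost i ρ) (n : ℕ)
    (h : List V) (v : V) : G.Pset n h v = G.Qset n v := by
  induction n generalizing h v with
  | zero => exact G.Pset_zero h v
  | succ n ih =>
    have hE : G.Eset (G.Pset n) h = G.EsetOfValues (G.costValues n) := by
      rw [show G.Pset n = fun _ => G.Qset n from funext fun h => funext (ih h)]
      ext ρ
      simp only [Eset, EsetOfValues, costValues, hpi, Set.forall_mem_image]
    rw [Nat.cast_succ, Pset_add_one, hE, ih, Qset_succ]

end QGame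

open QGame in
/-- For games on a finite graph with prefix-independent
cost functions of finite range `C_i ⊂ ℚ`, the elimination procedure
stabilizes in finitely many steps: there is `α* ∈ ℕ` with
`P_{α*}(v) = P_{α*+1}(v)` for all vertices `v`. -/
theorem prefixIndep_finiteRange_finite_fixpoint {P V : Type}
    [Finite P] [Finite V] (G : QGame P V)
    (hpi : ∀ (i : P) (h : List V) (ρ : ℕ → V),
      G.cost i (prepend h ρ) = G.cost i ρ)
    (hrange : ∀ i : P, ∃ C : Finset ℚ, ∀ ρ : ℕ → V, G.IsPlay ρ →
      G.cost i ρ ∈ (fun q : ℚ => ((q : ℝ) : EReal)) '' C) :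
    ∃ αstar : ℕ, ∀ v : V,
      G.Pset (αstar : Ordinal) [] v = G.Pset ((αstar : Ordinal) + 1) [] v := by
  choose C hC using hrange
  obtain ⟨n, hn⟩ := G.costValues_antitone.exists_succ_eq_of_finite_range
    (G.finite_range_costValues (fun i => (C i).finite_toSet.image _) hC)
  refine ⟨n + 1, fun v => ?_⟩
  rw [← Nat.cast_succ, G.Pset_natCast_eq_Qset hpi, G.Pset_natCast_eq_Qset hpi]
  exact (G.Qset_stable_of_costValues_succ_eq hn v).symm
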